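/- arXiv:2305.12352 — 3 statements merged into one kernel-verified Lean document; each statement's English description precedes it below -/
import Mathlib

section
/- Let n ≥ 1 and δ ∈ (0,1), and let λ_1, …, λ_n be real numbers in (0,1). Suppose that for every integer j with 1 ≤ j ≤ ⌈1/δ⌉ the set I_j = { i ∈ {1,…,n} : λ_i ∈ [(j−1)δ, jδ] } satisfies |I_j| ≤ 2nδ. Then every subset S ⊆ {1,…,n} with |S| ≥ 4nδ satisfies ∑_{i∈S} λ_i ≥ |S|²/(8n). -/
lemma sum_Icc_id_real (k : ℕ) : ∑ j ∈ Finset.Icc 1 k, (j : ℝ) = k * (k + 1) / 2 := by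
  induction k with
  | zero => simp
  | succ m ih =>
    rw [Finset.sum_Icc_succ_top (by omega : 1 ≤ m + 1), ih]
    push_cast; ring

/-- deterministic second part of Lemma A.4.
If reals `λ i ∈ (0,1)` are such that each bucket
`I j = {i : λ i ∈ [(j-1)δ, jδ]}`, `1 ≤ j ≤ ⌈1/δ⌉`, has at most `2nδ` elements,
then every subset `S` with `|S| ≥ 4nδ` satisfies `∑_{i∈S} λ i ≥ |S|²/(8n)`. -/
theorem bucket_subset_sum_lower_bound
    (n : ℕ) (hn : 1 ≤ n) (δ : ℝ) (hδ : δ ∈ Set.Ioo (0 : ℝ) 1)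
    (lam : Fin n → ℝ) (hlam : ∀ i, lam i ∈ Set.Ioo (0 : ℝ) 1)
    (hbucket : ∀ j : ℕ, 1 ≤ j → j ≤ ⌈1 / δ⌉₊ →
      (((Finset.univ : Finset (Fin n)).filter
          (fun i => ((j : ℝ) - 1) * δ ≤ lam i ∧ lam i ≤ (j : ℝ) * δ)).card : ℝ)
        ≤ 2 * n * δ) :
    ∀ S : Finset (Fin n), 4 * n * δ ≤ (S.card : ℝ) →
      (S.card : ℝ) ^ 2 / (8 * n) ≤ ∑ i ∈ S, lam i := by
  classical
  obtain ⟨hδ0, hδ1⟩ := hδ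
  intro S hS
  have hn0 : (0 : ℝ) < n := by exact_mod_cast hn
  set s : ℝ := (S.card : ℝ) with hsdef
  have hs0 : (0 : ℝ) < s := lt_of_lt_of_le (by positivity) hS
  have hsn : s ≤ n := by
    have h : S.card ≤ n := le_trans (Finset.card_le_univ S) (by simp)
    rw [hsdef]
    exact_mod_cast h
  set k : ℕ := ⌈s / (4 * n * δ)⌉₊ with hkdef
  have hden : (0 : ℝ) < 4 * n * δ := by positivity
  have hkge : s / (4 * n * δ) ≤ (k : ℝ) := Nat.le_ceil _
  have hklt : (k : ℝ) < s / (4 * n * δ) + 1 :=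
    Nat.ceil_lt_add_one (by positivity)
  have hkceil : k ≤ ⌈1 / δ⌉₊ := by
    apply Nat.ceil_le_ceil
    rw [div_le_div_iff₀ hden hδ0]
    nlinarith
  -- per-threshold bound : few elements below jδ
  have hbig : ∀ j ∈ Finset.Icc 1 k,
      s - 2 * n * (j : ℝ) * δ ≤ ((S.filter (fun i => (j : ℝ) * δ ≤ lam i)).card : ℝ) := by
    intro j hj
    rw [Finset.mem_Icc] at hj
    obtain ⟨hj1, hjk⟩ := hj
    have hsplit := Finset.card_filter_add_card_filter_not
      (s := S) (p := fun i => (j : ℝ) * δ ≤ lam i)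
    have hsub : S.filter (fun i => ¬ ((j : ℝ) * δ ≤ lam i)) ⊆
        (Finset.Icc 1 j).biUnion (fun l => (Finset.univ : Finset (Fin n)).filter
          (fun i => ((l : ℝ) - 1) * δ ≤ lam i ∧ lam i ≤ (l : ℝ) * δ)) := by
      intro i hi
      simp only [Finset.mem_filter, not_le] at hi
      obtain ⟨hiS, hilt⟩ := hi
      have h0 : 0 < lam i := (hlam i).1
      have hdiv0 : 0 ≤ lam i / δ := by positivity
      refine Finset.mem_biUnion.mpr ⟨⌊lam i / δ⌋₊ + 1, ?_, ?_⟩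
      · rw [Finset.mem_Icc]
        constructor
        · omega
        · have : lam i / δ < j := by
            rw [div_lt_iff₀ hδ0]
            calc lam i < (j : ℝ) * δ := hilt
              _ = (j : ℝ) * δ := rfl
          have := Nat.floor_lt hdiv0 |>.mpr this
          omega
      · simp only [Finset.mem_filter, Finset.mem_univ, true_and]
        constructor
        · push_cast
          have h1 : (⌊lam i / δ⌋₊ : ℝ) ≤ lam i / δ := Nat.floor_le hdiv0
          rw [show ((⌊lam i / δ⌋₊ : ℝ) + 1 - 1) = (⌊lam i / δ⌋₊ : ℝ) by ring]
          calc (⌊lam i / δ⌋₊ : ℝ) * δ ≤ (lam i / δ) * δ := by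
                exact mul_le_mul_of_nonneg_right h1 (le_of_lt hδ0)
            _ = lam i := by field_simp
        · push_cast
          have h2 : lam i / δ < (⌊lam i / δ⌋₊ : ℝ) + 1 := Nat.lt_floor_add_one _
          have := (div_lt_iff₀ hδ0).mp h2
          linarith
    have hcard : ((S.filter (fun i => ¬ ((j : ℝ) * δ ≤ lam i))).card : ℝ) ≤ 2 * n * j * δ := by
      have h1 : (S.filter (fun i => ¬ ((j : ℝ) * δ ≤ lam i))).card ≤
          ∑ l ∈ Finset.Icc 1 j, ((Finset.univ : Finset (Fin n)).filter
            (fun i => ((l : ℝ) - 1) * δ ≤ lam i ∧ lam i ≤ (l : ℝ) * δ)).card :=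
        le_trans (Finset.card_le_card hsub) (Finset.card_biUnion_le)
      have h2 : (∑ l ∈ Finset.Icc 1 j, (((Finset.univ : Finset (Fin n)).filter
            (fun i => ((l : ℝ) - 1) * δ ≤ lam i ∧ lam i ≤ (l : ℝ) * δ)).card : ℝ))
          ≤ ∑ l ∈ Finset.Icc 1 j, (2 * n * δ) := by
        apply Finset.sum_le_sum
        intro l hl
        rw [Finset.mem_Icc] at hl
        exact hbucket l hl.1 (le_trans (le_trans hl.2 hjk) hkceil)
      have h3 : (∑ l ∈ Finset.Icc 1 j, (2 * (n:ℝ) * δ)) = (j : ℝ) * (2 * n * δ) := by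
        rw [Finset.sum_const, Nat.card_Icc]
        simp only [Nat.add_sub_cancel, nsmul_eq_mul]
      calc ((S.filter (fun i => ¬ ((j : ℝ) * δ ≤ lam i))).card : ℝ)
          ≤ (∑ l ∈ Finset.Icc 1 j, (((Finset.univ : Finset (Fin n)).filter
            (fun i => ((l : ℝ) - 1) * δ ≤ lam i ∧ lam i ≤ (l : ℝ) * δ)).card : ℝ)) := by
            exact_mod_cast h1
        _ ≤ (j : ℝ) * (2 * n * δ) := by rw [← h3]; exact h2
        _ = 2 * n * j * δ := by ring
    have hsplit' : ((S.filter (fun i => (j : ℝ) * δ ≤ lam i)).card : ℝ)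
        + ((S.filter (fun i => ¬ ((j : ℝ) * δ ≤ lam i))).card : ℝ) = s := by
      rw [hsdef]
      exact_mod_cast hsplit
    linarith
  -- pointwise bound : δ times number of thresholds below lam i is at most lam i
  have hpt : ∀ i ∈ S,
      δ * (((Finset.Icc 1 k).filter (fun j : ℕ => (j : ℝ) * δ ≤ lam i)).card : ℝ) ≤ lam i := by
    intro i _
    have h0 : 0 < lam i := (hlam i).1
    have hdiv0 : 0 ≤ lam i / δ := by positivity
    have hsub : (Finset.Icc 1 k).filter (fun j : ℕ => (j : ℝ) * δ ≤ lam i) ⊆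
        Finset.Icc 1 ⌊lam i / δ⌋₊ := by
      intro j hj
      simp only [Finset.mem_filter, Finset.mem_Icc] at hj ⊢
      refine ⟨hj.1.1, ?_⟩
      apply Nat.le_floor
      rw [le_div_iff₀ hδ0]
      linarith [hj.2]
    have hcard : (((Finset.Icc 1 k).filter (fun j : ℕ => (j : ℝ) * δ ≤ lam i)).card : ℝ)
        ≤ (⌊lam i / δ⌋₊ : ℝ) := by
      have := Finset.card_le_card hsub
      rw [Nat.card_Icc] at this
      exact_mod_cast le_trans this (by omega)
    calc δ * (((Finset.Icc 1 k).filter (fun j : ℕ => (j : ℝ) * δ ≤ lam i)).card : ℝ)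
        ≤ δ * (lam i / δ) := by
          apply mul_le_mul_of_nonneg_left _ (le_of_lt hδ0)
          exact le_trans hcard (Nat.floor_le hdiv0)
      _ = lam i := by field_simp
  -- swap the order of summation
  have hswap : ∑ j ∈ Finset.Icc 1 k, ((S.filter (fun i => (j : ℝ) * δ ≤ lam i)).card : ℝ)
      = ∑ i ∈ S, (((Finset.Icc 1 k).filter (fun j : ℕ => (j : ℝ) * δ ≤ lam i)).card : ℝ) := by
    simp only [Finset.card_filter]
    push_cast
    exact Finset.sum_comm
  have key : δ * ∑ j ∈ Finset.Icc 1 k, (s - 2 * n * (j : ℝ) * δ) ≤ ∑ i ∈ S, lam i := by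
    calc δ * ∑ j ∈ Finset.Icc 1 k, (s - 2 * n * (j : ℝ) * δ)
        ≤ δ * ∑ j ∈ Finset.Icc 1 k, ((S.filter (fun i => (j : ℝ) * δ ≤ lam i)).card : ℝ) := by
          exact mul_le_mul_of_nonneg_left (Finset.sum_le_sum hbig) (le_of_lt hδ0)
      _ = δ * ∑ i ∈ S, (((Finset.Icc 1 k).filter (fun j : ℕ => (j : ℝ) * δ ≤ lam i)).card : ℝ) := by
          rw [hswap]
      _ = ∑ i ∈ S, δ * (((Finset.Icc 1 k).filter (fun j : ℕ => (j : ℝ) * δ ≤ lam i)).card : ℝ) := by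
          rw [Finset.mul_sum]
      _ ≤ ∑ i ∈ S, lam i := Finset.sum_le_sum hpt
  -- compute the sum
  have hsum : ∑ j ∈ Finset.Icc 1 k, (s - 2 * n * (j : ℝ) * δ)
      = (k : ℝ) * s - n * δ * k * (k + 1) := by
    rw [Finset.sum_sub_distrib, Finset.sum_const, Nat.card_Icc]
    have : ∑ j ∈ Finset.Icc 1 k, (2 * (n : ℝ) * (j : ℝ) * δ)
        = 2 * n * δ * ((k : ℝ) * (k + 1) / 2) := by
      rw [← sum_Icc_id_real k, Finset.mul_sum]
      congr 1; ext j; ring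
    rw [this]
    simp only [Nat.add_sub_cancel, nsmul_eq_mul]
    ring
  -- final arithmetic
  have hfin : s ^ 2 / (8 * n) ≤ δ * ((k : ℝ) * s - n * δ * k * (k + 1)) := by
    have hx1 : s / 4 ≤ n * δ * (k : ℝ) := by
      rw [div_le_iff₀ hden] at hkge
      nlinarith
    have hx2 : n * δ * (k : ℝ) < s / 4 + n * δ := by
      have := hklt
      rw [div_add' _ _ _ (ne_of_gt hden)] at this
      rw [lt_div_iff₀ hden] at this
      nlinarith
    have ht : n * δ ≤ s / 4 := by linarith
    rw [div_le_iff₀ (by positivity : (0:ℝ) < 8 * n)]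
    have hδk0 : 0 ≤ n * δ * (k : ℝ) := by positivity
    nlinarith [mul_nonneg (sub_nonneg.mpr hx1) (by linarith : (0:ℝ) ≤ s / 4 + n * δ - n * δ * (k:ℝ)),
      mul_nonneg (sub_nonneg.mpr hx1) (by linarith : (0:ℝ) ≤ s / 2 - 2 * (n * δ)),
      mul_nonneg (by linarith : (0:ℝ) ≤ s/4) (by linarith : (0:ℝ) ≤ s/4 - n*δ)]
  calc s ^ 2 / (8 * n) ≤ δ * ((k : ℝ) * s - n * δ * k * (k + 1)) := hfin
    _ = δ * ∑ j ∈ Finset.Icc 1 k, (s - 2 * n * (j : ℝ) * δ) := by rw [hsum]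
    _ ≤ ∑ i ∈ S, lam i := key
end

section
/- Let n ≥ 1, δ > 0, and let f_1 > f_2 > … > f_n be real numbers in [0,1]. Let k be an integer with 1 ≤ k < n, set U = {1, …, k}, and let U* ⊆ {1, …, n}. For each i let a_i ∈ (0,1] and c_i = f_i·a_i. Suppose: (i) ∑_{i ∈ U*∖U} c_i ≥ ∑_{i ∈ U∖U*} c_i; (ii) ∑_{i ∈ U*∖U} a_i ≤ 1 + ∑_{i ∈ U∖U*} a_i; and (iii) |{ i ∈ {1,…,n} : f_i ∈ [f_{k+1} − δ, f_{k+1}] }| ≤ 4nδ. Then ∑_{i ∈ U∖U*} a_i ≤ 1/δ + 4δn. -/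
/-- central exchange estimate in the proof of Theorem 4.1.
With strictly decreasing ratios `f 1 > ⋯ > f n` in `[0,1]`, weights `a i ∈ (0,1]`,
values `c i = f i * a i`, `U = {1,…,k}` (`0`-based: indices `< k`), and a set `U*`
satisfying the exchange inequalities (i), (ii) and the bucket bound (iii) at the
ratio `f (k+1)` (`0`-based index `k`), one has `∑_{i ∈ U \ U*} a i ≤ 1/δ + 4δn`. -/
theorem knapsack_exchange_estimate
    (n : ℕ) (hn : 1 ≤ n) (δ : ℝ) (hδ : 0 < δ)
    (f : Fin n → ℝ) (hf01 : ∀ i, f i ∈ Set.Icc (0 : ℝ) 1) (hanti : StrictAnti f)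
    (k : ℕ) (hk1 : 1 ≤ k) (hkn : k < n)
    (a : Fin n → ℝ) (ha : ∀ i, a i ∈ Set.Ioc (0 : ℝ) 1)
    (c : Fin n → ℝ) (hc : ∀ i, c i = f i * a i)
    (U Ustar : Finset (Fin n))
    (hU : U = (Finset.univ : Finset (Fin n)).filter (fun i : Fin n => (i : ℕ) < k))
    (h1 : ∑ i ∈ U \ Ustar, c i ≤ ∑ i ∈ Ustar \ U, c i)
    (h2 : ∑ i ∈ Ustar \ U, a i ≤ 1 + ∑ i ∈ U \ Ustar, a i)
    (h3 : (((Finset.univ : Finset (Fin n)).filter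
        (fun i => f ⟨k, hkn⟩ - δ ≤ f i ∧ f i ≤ f ⟨k, hkn⟩)).card : ℝ) ≤ 4 * n * δ) :
    ∑ i ∈ U \ Ustar, a i ≤ 1 / δ + 4 * δ * n := by
  obtain ⟨hg0, hg1⟩ := hf01 ⟨k, hkn⟩
  set g : ℝ := f ⟨k, hkn⟩ with hgdef
  have ha0 : ∀ i, 0 < a i := fun i => (ha i).1
  have ha1 : ∀ i, a i ≤ 1 := fun i => (ha i).2
  have hf0 : ∀ i, 0 ≤ f i := fun i => (hf01 i).1
  set S : ℝ := ∑ i ∈ U \ Ustar, a i with hSdef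
  have hS0 : 0 ≤ S := Finset.sum_nonneg fun i _ => (ha0 i).le
  have hmemU : ∀ i : Fin n, i ∈ U ↔ (i : ℕ) < k := by
    intro i; rw [hU]; simp
  have hfU : ∀ i ∈ U \ Ustar, g ≤ f i := by
    intro i hi
    have hik : (i : ℕ) < k := (hmemU i).1 (Finset.mem_sdiff.1 hi).1
    exact (hanti (show i < ⟨k, hkn⟩ from hik)).le
  have hfUs : ∀ i ∈ Ustar \ U, f i ≤ g := by
    intro i hi
    have hik : k ≤ (i : ℕ) :=
      le_of_not_gt (fun h => (Finset.mem_sdiff.1 hi).2 ((hmemU i).2 h))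
    exact hanti.antitone (show (⟨k, hkn⟩ : Fin n) ≤ i from hik)
  have hlow : g * S ≤ ∑ i ∈ U \ Ustar, c i := by
    rw [hSdef, Finset.mul_sum]
    apply Finset.sum_le_sum
    intro i hi
    rw [hc]
    exact mul_le_mul_of_nonneg_right (hfU i hi) (ha0 i).le
  by_cases hcase : δ ≤ g
  · -- main case: g ≥ δ
    have hup : ∑ i ∈ Ustar \ U, c i ≤
        (g - δ) * (∑ i ∈ Ustar \ U, a i) +
        δ * (((Ustar \ U).filter (fun i => g - δ ≤ f i ∧ f i ≤ g)).card : ℝ) := by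
      have hstep : ∑ i ∈ Ustar \ U, c i ≤
          ∑ i ∈ Ustar \ U, ((g - δ) * a i + if g - δ ≤ f i ∧ f i ≤ g then δ else 0) := by
        apply Finset.sum_le_sum
        intro i hi
        rw [hc]
        by_cases hb : g - δ ≤ f i
        · rw [if_pos ⟨hb, hfUs i hi⟩]
          nlinarith [ha0 i, ha1 i, hfUs i hi, hf0 i]
        · rw [if_neg (fun h => hb h.1), add_zero]
          push_neg at hb
          nlinarith [ha0 i, ha1 i, hf0 i]
      refine hstep.trans (le_of_eq ?_)
      rw [Finset.sum_add_distrib, ← Finset.mul_sum, ← Finset.sum_filter,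
        Finset.sum_const, nsmul_eq_mul, mul_comm]
      ring
    have hcard : (((Ustar \ U).filter (fun i => g - δ ≤ f i ∧ f i ≤ g)).card : ℝ)
        ≤ 4 * n * δ := by
      refine le_trans ?_ h3
      exact_mod_cast Finset.card_le_card
        (Finset.filter_subset_filter _ (Finset.subset_univ _))
    have hAle : (g - δ) * (∑ i ∈ Ustar \ U, a i) ≤ (g - δ) * (1 + S) :=
      mul_le_mul_of_nonneg_left h2 (by linarith)
    have hδC : δ * (((Ustar \ U).filter (fun i => g - δ ≤ f i ∧ f i ≤ g)).card : ℝ)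
        ≤ δ * (4 * n * δ) := mul_le_mul_of_nonneg_left hcard hδ.le
    have hkey : δ * S ≤ 1 + 4 * n * δ * δ := by nlinarith
    have h1δ : (1 / δ) * δ = 1 := one_div_mul_cancel hδ.ne'
    nlinarith [hδ, hkey, h1δ]
  · -- degenerate case: g < δ
    push_neg at hcase
    have hsub : Ustar \ U ⊆ (Finset.univ : Finset (Fin n)).filter
        (fun i => g - δ ≤ f i ∧ f i ≤ g) := by
      intro i hi
      simp only [Finset.mem_filter, Finset.mem_univ, true_and]
      exact ⟨by linarith [hf0 i], hfUs i hi⟩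
    have hcard : ((Ustar \ U).card : ℝ) ≤ 4 * n * δ :=
      le_trans (by exact_mod_cast Finset.card_le_card hsub) h3
    have hup2 : ∑ i ∈ Ustar \ U, c i ≤ ((Ustar \ U).card : ℝ) * g := by
      rw [← nsmul_eq_mul]
      apply Finset.sum_le_card_nsmul
      intro i hi
      rw [hc]
      nlinarith [ha0 i, ha1 i, hf0 i, hfUs i hi]
    have hk' : k - 1 < n := by omega
    set h' : ℝ := f ⟨k - 1, hk'⟩ with hh'def
    have hgh' : g < h' := hanti (show (⟨k - 1, hk'⟩ : Fin n) < ⟨k, hkn⟩ by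
      simp [Fin.lt_def]; omega)
    have hh'pos : 0 < h' := lt_of_le_of_lt hg0 hgh'
    have hlow2 : h' * S ≤ ∑ i ∈ U \ Ustar, c i := by
      rw [hSdef, Finset.mul_sum]
      apply Finset.sum_le_sum
      intro i hi
      rw [hc]
      refine mul_le_mul_of_nonneg_right ?_ (ha0 i).le
      have hik : (i : ℕ) < k := (hmemU i).1 (Finset.mem_sdiff.1 hi).1
      exact hanti.antitone (show i ≤ (⟨k - 1, hk'⟩ : Fin n) by
        simp [Fin.le_def]; omega)
    have hcard0 : (0 : ℝ) ≤ ((Ustar \ U).card : ℝ) := Nat.cast_nonneg _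
    have hS4 : S ≤ 4 * n * δ := by
      have hchain : h' * S ≤ h' * (4 * n * δ) := by nlinarith
      exact le_of_mul_le_mul_left hchain hh'pos
    have : 0 < 1 / δ := by positivity
    linarith
end

section
/- Let n ≥ 1, let γ ∈ (0, 1/2), and set b = γn. Let a_1, …, a_n, f_1, …, f_n be 2n mutually independent random variables, each uniformly distributed on [0,1], and set c_i = f_i·a_i. Consider the knapsack problem: maximize ∑_{i=1}^n c_i y_i over y ∈ {0,1}^n subject to ∑_{i=1}^n a_i y_i ≤ b, and its LP relaxation over y ∈ [0,1]^n. Then with probability at least 1 − ⌈2√n⌉·exp(−√n/8) the following holds: for every optimal solution y* of the knapsack problem and every optimal solution ỹ of the LP relaxation having at most one coordinate strictly between 0 and 1, setting U = { i : ỹ_i = 1 } and L = { i : ỹ_i = 0 }, one has ∑_{i∈U} y_i* ≥ |U| − 4√2·n^{3/4} and ∑_{i∈L} y_i* ≤ 4√2·n^{3/4}. -/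
/-!
An optimal LP solution `ytil` is a threshold solution: for some `λ ≥ 0` satisfying complementary
slackness, items of ratio `f i > λ` are taken fully and items of ratio `f i < λ` not at all.
Rounding down its single fractional coordinate shows that the LP optimum exceeds the integer
optimum by at most `1`, and this gap dominates `∑ a i * |f i - λ| * |ytil i - ystar i|`. So an
item on which `ytil` and `ystar` disagree has its ratio within `δ = n^(-1/4)` of `λ`, or its cost
at most `δ`, or is one of at most `δ⁻²` exceptional items. Chernoff's bound at `t = log 2` shows
that, outside an event of probability at most `⌈2√n⌉ exp (-√n/8)`, each of the `K = ⌈2√n⌉ - 1`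
buckets `[k/K, (k+1)/K)` holds fewer than `n/K + √n/2` ratios and fewer than `2 n^(3/4)` costs
are at most `δ`. Both disagreement counts are then at most
`(δK + 2)(n/K + √n/2) + 2 n^(3/4) + √n ≤ 4√2 n^(3/4)`. For `n ≤ 1024` that bound is at least `n`.
-/

open MeasureTheory ProbabilityTheory Finset Real
open scoped ENNReal

namespace Knapsack

variable {ι : Type*}

def IsBinary (y : ι → ℝ) : Prop := ∀ i, y i = 0 ∨ y i = 1

def InUnitCube (y : ι → ℝ) : Prop := ∀ i, y i ∈ Set.Icc (0 : ℝ) 1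

def IsThreshold (f y : ι → ℝ) (t : ℝ) : Prop :=
  (∀ i, f i < t → y i = 0) ∧ ∀ i, t < f i → y i = 1

lemma IsBinary.inUnitCube {y : ι → ℝ} (hy : IsBinary y) : InUnitCube y := fun i => by
  rcases hy i with h | h <;> simp [h]

lemma InUnitCube.add_single [DecidableEq ι] {y : ι → ℝ} (hy : InUnitCube y) {j : ι} {s : ℝ}
    (hs : y j + s ∈ Set.Icc (0 : ℝ) 1) : InUnitCube (y + Pi.single j s) := by
  intro i
  rcases eq_or_ne i j with rfl | hij
  · simpa using hs
  · simpa [Pi.single_apply, hij] using hy i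

lemma IsThreshold.abs_mul_abs_eq {f y z : ι → ℝ} {t : ℝ} (hthr : IsThreshold f y t)
    (hz : InUnitCube z) (i : ι) : |f i - t| * |y i - z i| = (f i - t) * (y i - z i) := by
  rw [← abs_mul, abs_of_nonneg]
  rcases lt_trichotomy (f i) t with h | h | h
  · rw [hthr.1 i h]
    nlinarith [(hz i).1]
  · simp [h]
  · rw [hthr.2 i h]
    nlinarith [(hz i).2]

lemma IsBinary.sum_eq_card {y : ι → ℝ} (hy : IsBinary y) (s : Finset ι) :
    ∑ i ∈ s, y i = #{i ∈ s | y i = 1} := by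
  rw [← sum_boole]
  exact sum_congr rfl fun i _ => by rcases hy i with h | h <;> simp [h]

variable [Fintype ι]

def IsKnapsackOpt (P : (ι → ℝ) → Prop) (a c : ι → ℝ) (b : ℝ) (y : ι → ℝ) : Prop :=
  P y ∧ ∑ i, a i * y i ≤ b ∧
    ∀ z, P z → ∑ i, a i * z i ≤ b → ∑ i, c i * z i ≤ ∑ i, c i * y i

/-- With `U = {i | ytil i = 1}` and `L = {i | ytil i = 0}`, the hyperplanes `C_U` and `C_L` with
slack `r` hold at every integer optimum `ystar`, for every LP optimum `ytil` with at most one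
fractional coordinate. -/
def BranchingHyperplanesValid (a f : ι → ℝ) (b r : ℝ) : Prop :=
  ∀ ystar : ι → ℝ, IsBinary ystar → ∑ i, a i * ystar i ≤ b →
    (∀ y, IsBinary y → ∑ i, a i * y i ≤ b → ∑ i, f i * a i * y i ≤ ∑ i, f i * a i * ystar i) →
  ∀ ytil : ι → ℝ, InUnitCube ytil → ∑ i, a i * ytil i ≤ b →
    (∀ y, InUnitCube y → ∑ i, a i * y i ≤ b → ∑ i, f i * a i * y i ≤ ∑ i, f i * a i * ytil i) →
    {i | ytil i ∈ Set.Ioo 0 1}.Subsingleton →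
    (#{i | ytil i = 1} : ℝ) - r ≤ ∑ i ∈ {i | ytil i = 1}, ystar i ∧
      ∑ i ∈ {i | ytil i = 0}, ystar i ≤ r

abbrev bucket (K k : ℕ) : Set ℝ := Set.Ico (k / K : ℝ) ((k + 1) / K)

lemma sum_mul_add_single [DecidableEq ι] (A y : ι → ℝ) (j : ι) (s : ℝ) :
    ∑ i, A i * (y + Pi.single j s : ι → ℝ) i = ∑ i, A i * y i + A j * s := by
  simp [mul_add, sum_add_distrib, Pi.single_apply]

/-- Moving weight `t` from item `i` to an item `j` of larger ratio keeps the weight and raises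
the value by `t * (f j - f i)`. -/
lemma IsKnapsackOpt.eq_zero_of_ratio_lt {a f y : ι → ℝ} {b : ℝ}
    (hy : IsKnapsackOpt InUnitCube a (fun i => f i * a i) b y) (ha : ∀ i, 0 < a i) {i j : ι}
    (hij : f i < f j) (hj : y j < 1) : y i = 0 := by
  classical
  obtain ⟨hcube, hfeas, hopt⟩ := hy
  by_contra hi
  have hi : 0 < y i := (hcube i).1.lt_of_ne' hi
  have hne : i ≠ j := by rintro rfl; exact hij.false
  set t := min (a i * y i) (a j * (1 - y j))
  have ht : 0 < t := lt_min (mul_pos (ha i) hi) (mul_pos (ha j) (by linarith))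
  set z : ι → ℝ := y + Pi.single j (t / a j) + Pi.single i (-(t / a i))
  have hti : t / a i ≤ y i :=
    (div_le_iff₀ (ha i)).2 (by linarith [min_le_left (a i * y i) (a j * (1 - y j))])
  have htj : t / a j ≤ 1 - y j :=
    (div_le_iff₀ (ha j)).2 (by linarith [min_le_right (a i * y i) (a j * (1 - y j))])
  have hz : InUnitCube z := by
    refine (hcube.add_single ⟨?_, ?_⟩).add_single ?_
    · linarith [(hcube j).1, div_pos ht (ha j)]
    · linarith
    · rw [Pi.add_apply, Pi.single_eq_of_ne hne, add_zero]
      constructor <;> linarith [(hcube i).2, div_pos ht (ha i)]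
  have hweight : ∑ k, a k * z k = ∑ k, a k * y k := by
    rw [sum_mul_add_single, sum_mul_add_single]
    field_simp [(ha i).ne', (ha j).ne']
    ring
  have hvalue : ∑ k, f k * a k * z k = ∑ k, f k * a k * y k + t * (f j - f i) := by
    rw [sum_mul_add_single, sum_mul_add_single]
    field_simp [(ha i).ne', (ha j).ne']
    ring
  have := hopt z hz (hweight ▸ hfeas)
  nlinarith [mul_pos ht (sub_pos.2 hij)]

lemma IsKnapsackOpt.weight_eq_of_lt_one {a f y : ι → ℝ} {b : ℝ}
    (hy : IsKnapsackOpt InUnitCube a (fun i => f i * a i) b y) (ha : ∀ i, 0 < a i) {j : ι}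
    (hfj : 0 < f j) (hj : y j < 1) : ∑ i, a i * y i = b := by
  classical
  obtain ⟨hcube, hfeas, hopt⟩ := hy
  by_contra hne
  have hslack : 0 < b - ∑ i, a i * y i := sub_pos.2 (hfeas.lt_of_ne hne)
  set t := min (a j * (1 - y j)) (b - ∑ i, a i * y i)
  have ht : 0 < t := lt_min (mul_pos (ha j) (by linarith)) hslack
  have htj : t / a j ≤ 1 - y j :=
    (div_le_iff₀ (ha j)).2 (by linarith [min_le_left (a j * (1 - y j)) (b - ∑ i, a i * y i)])
  have hz := hcube.add_single (j := j) ⟨by linarith [(hcube j).1, div_pos ht (ha j)], by linarith⟩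
  have hweight : ∑ i, a i * (y + Pi.single j (t / a j) : ι → ℝ) i ≤ b := by
    rw [sum_mul_add_single, mul_div_cancel₀ _ (ha j).ne']
    linarith [min_le_right (a j * (1 - y j)) (b - ∑ i, a i * y i)]
  have := hopt _ hz hweight
  rw [sum_mul_add_single, mul_assoc, mul_div_cancel₀ _ (ha j).ne'] at this
  nlinarith [mul_pos hfj ht]

lemma IsKnapsackOpt.exists_threshold {a f y : ι → ℝ} {b : ℝ}
    (hy : IsKnapsackOpt InUnitCube a (fun i => f i * a i) b y) (ha : ∀ i, 0 < a i)
    (hf : ∀ i, 0 < f i) :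
    ∃ t, 0 ≤ t ∧ IsThreshold f y t ∧ t * (b - ∑ i, a i * y i) = 0 := by
  by_cases hfull : ∀ i, y i = 1
  · exact ⟨0, le_rfl, ⟨fun i hi => absurd hi (hf i).le.not_gt, fun i _ => hfull i⟩, zero_mul _⟩
  obtain ⟨j, hj⟩ := not_forall.1 hfull
  have hj : y j < 1 := (hy.1 j).2.lt_of_ne hj
  obtain ⟨m, hm, hmax⟩ := exists_max_image {i | y i < 1} f ⟨j, by simpa using hj⟩
  rw [mem_filter_univ] at hm
  refine ⟨f m, (hf m).le, ⟨fun i hi => hy.eq_zero_of_ratio_lt ha hi hm, fun i hi => ?_⟩, ?_⟩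
  · by_contra hi1
    exact hi.not_ge (hmax i (by simpa using (hy.1 i).2.lt_of_ne hi1))
  · rw [hy.weight_eq_of_lt_one ha (hf m) hm, sub_self, mul_zero]

lemma IsKnapsackOpt.value_le_add_one {a c ytil ystar : ι → ℝ} {b : ℝ}
    (htil : IsKnapsackOpt InUnitCube a c b ytil) (hstar : IsKnapsackOpt IsBinary a c b ystar)
    (ha : ∀ i, 0 ≤ a i) (hc : ∀ i, c i ≤ 1) (hfrac : {i | ytil i ∈ Set.Ioo 0 1}.Subsingleton) :
    ∑ i, c i * ytil i ≤ ∑ i, c i * ystar i + 1 := by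
  obtain ⟨hcube, hfeas, -⟩ := htil
  set z : ι → ℝ := fun i => if ytil i = 1 then 1 else 0
  have hz : IsBinary z := fun i => by by_cases h : ytil i = 1 <;> simp [z, h]
  have hzweight : ∑ i, a i * z i ≤ b := by
    refine le_trans (sum_le_sum fun i _ => ?_) hfeas
    by_cases h : ytil i = 1
    · simp [z, h]
    · simpa [z, h] using mul_nonneg (ha i) (hcube i).1
  have hround : ∀ i, c i * ytil i - c i * z i ≤ if ytil i ∈ Set.Ioo 0 1 then 1 else 0 := by
    intro i
    by_cases h1 : ytil i = 1
    · simp [z, h1]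
    by_cases h0 : ytil i = 0
    · simp [z, h0]
    have hfr : ytil i ∈ Set.Ioo 0 1 :=
      ⟨(hcube i).1.lt_of_ne' h0, (hcube i).2.lt_of_ne h1⟩
    simp only [z, if_neg h1, if_pos hfr, mul_zero, sub_zero]
    nlinarith [hc i, hfr.1, hfr.2]
  have hcard : #{i | ytil i ∈ Set.Ioo 0 1} ≤ 1 :=
    card_le_one.2 fun i hi j hj => hfrac (by simpa using hi) (by simpa using hj)
  have := hstar.2.2 z hz hzweight
  have : ∑ i, (c i * ytil i - c i * z i) ≤ 1 := by
    refine (sum_le_sum fun i _ => hround i).trans ?_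
    rw [sum_boole]
    exact_mod_cast hcard
  rw [sum_sub_distrib] at this
  linarith

theorem exists_threshold_sum_mul_abs_le_one {a f ytil ystar : ι → ℝ} {b : ℝ}
    (htil : IsKnapsackOpt InUnitCube a (fun i => f i * a i) b ytil)
    (hstar : IsKnapsackOpt IsBinary a (fun i => f i * a i) b ystar)
    (ha : ∀ i, a i ∈ Set.Ioc 0 1) (hf : ∀ i, f i ∈ Set.Ioc 0 1)
    (hfrac : {i | ytil i ∈ Set.Ioo 0 1}.Subsingleton) :
    ∃ t, 0 ≤ t ∧ IsThreshold f ytil t ∧ ∑ i, a i * |f i - t| * |ytil i - ystar i| ≤ 1 := by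
  obtain ⟨t, ht, hthr, hslack⟩ := htil.exists_threshold (fun i => (ha i).1) (fun i => (hf i).1)
  refine ⟨t, ht, hthr, ?_⟩
  have hgap := htil.value_le_add_one hstar (fun i => (ha i).1.le)
    (fun i => mul_le_one₀ (hf i).2 (ha i).1.le (ha i).2)
  have hexpand : ∑ i, a i * |f i - t| * |ytil i - ystar i| = (∑ i, f i * a i * ytil i -
      ∑ i, f i * a i * ystar i) - t * (∑ i, a i * ytil i - ∑ i, a i * ystar i) := by
    simp only [mul_assoc, hthr.abs_mul_abs_eq hstar.1.inUnitCube, mul_sub, ← sum_sub_distrib,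
      mul_sum]
    exact sum_congr rfl fun i _ => by ring
  rw [hexpand]
  nlinarith [hgap hfrac, mul_nonneg ht (sub_nonneg.2 hstar.2.1)]

/-- Bucket counts control interval counts: `[u, v]` meets at most `(v - u) * K + 2` buckets. -/
lemma card_filter_mem_Icc_le {f : ι → ℝ} {K : ℕ} {cap u v : ℝ} (hK : 0 < K)
    (hf : ∀ i, f i ∈ Set.Ico 0 1) (hbucket : ∀ k < K, (#{i | f i ∈ bucket K k} : ℝ) ≤ cap)
    (hv : 0 ≤ v) (huv : u ≤ v) :
    (#{i | f i ∈ Set.Icc u v} : ℝ) ≤ ((v - u) * K + 2) * cap := by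
  have hK' : (0 : ℝ) < K := by exact_mod_cast hK
  have hcap : 0 ≤ cap := (Nat.cast_nonneg _).trans (hbucket 0 hK)
  set s : Finset ι := {i | f i ∈ Set.Icc u v}
  set idx : ι → ℕ := fun i => ⌊f i * K⌋₊
  have hfiber : ∀ k ∈ s.image idx, (#{i ∈ s | idx i = k} : ℝ) ≤ cap := by
    intro k hk
    obtain ⟨i, -, rfl⟩ := mem_image.1 hk
    refine le_trans ?_ (hbucket (idx i) ?_)
    · refine Nat.cast_le.2 (card_le_card fun j hj => ?_)
      rw [mem_filter] at hj ⊢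
      refine ⟨mem_univ j, ?_⟩
      rw [bucket, Set.mem_Ico, div_le_iff₀ hK', lt_div_iff₀ hK']
      exact (Nat.floor_eq_iff (mul_nonneg (hf j).1 hK'.le)).1 hj.2
    · exact (Nat.floor_lt (mul_nonneg (hf i).1 hK'.le)).2 (by nlinarith [(hf i).2])
  have himage : s.image idx ⊆ Icc ⌊u * K⌋₊ ⌊v * K⌋₊ := by
    intro k hk
    obtain ⟨i, hi, rfl⟩ := mem_image.1 hk
    obtain ⟨hui, hiv⟩ := (mem_filter.1 hi).2
    exact mem_Icc.2 ⟨Nat.floor_le_floor (by gcongr), Nat.floor_le_floor (by gcongr)⟩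
  have hfloor : ⌊u * K⌋₊ ≤ ⌊v * K⌋₊ + 1 := (Nat.floor_le_floor (by gcongr)).trans (Nat.le_succ _)
  have hnumber : (#(s.image idx) : ℝ) ≤ (v - u) * K + 2 := by
    refine (Nat.cast_le.2 (card_le_card himage)).trans ?_
    rw [Nat.card_Icc, Nat.cast_sub hfloor]
    push_cast
    nlinarith [Nat.floor_le (mul_nonneg hv hK'.le), Nat.lt_floor_add_one (u * K)]
  calc (#s : ℝ) = ∑ k ∈ s.image idx, (#{i ∈ s | idx i = k} : ℝ) := by
        exact_mod_cast card_eq_sum_card_image idx s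
    _ ≤ #(s.image idx) * cap := by simpa using sum_le_sum hfiber
    _ ≤ ((v - u) * K + 2) * cap := by gcongr

lemma card_filter_le_div_of_sum_le {g : ι → ℝ} (hg : ∀ i, 0 ≤ g i) {m : ℝ} (hm : 0 < m) :
    (#{i | m ≤ g i} : ℝ) ≤ (∑ i, g i) / m := by
  rw [le_div_iff₀ hm]
  calc (#{i | m ≤ g i} : ℝ) * m = ∑ _i ∈ {i | m ≤ g i}, m := by simp
    _ ≤ ∑ i ∈ {i | m ≤ g i}, g i := sum_le_sum fun i hi => (mem_filter.1 hi).2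
    _ ≤ ∑ i, g i := sum_le_sum_of_subset_of_nonneg (subset_univ _) fun i _ _ => hg i

lemma card_le_of_cover {a f g : ι → ℝ} {D : Finset ι} {K : ℕ} {cap u v δ : ℝ} (hK : 0 < K)
    (hf : ∀ i, f i ∈ Set.Ico 0 1) (hbucket : ∀ k < K, (#{i | f i ∈ bucket K k} : ℝ) ≤ cap)
    (hv : 0 ≤ v) (huv : u ≤ v) (hδ : 0 < δ) (hg : ∀ i, 0 ≤ g i) (hsum : ∑ i, g i ≤ 1)
    (hD : ∀ i ∈ D, f i ∈ Set.Icc u v ∨ a i ≤ δ ∨ δ ^ 2 ≤ g i) :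
    (#D : ℝ) ≤ ((v - u) * K + 2) * cap + #{i | a i ≤ δ} + (δ ^ 2)⁻¹ := by
  classical
  have hcover : D ⊆ ({i | f i ∈ Set.Icc u v} : Finset ι) ∪ ({i | a i ≤ δ} : Finset ι) ∪
      ({i | δ ^ 2 ≤ g i} : Finset ι) := by
    intro i hi
    simpa [or_assoc] using hD i hi
  have hmarkov : (#{i | δ ^ 2 ≤ g i} : ℝ) ≤ (δ ^ 2)⁻¹ :=
    (card_filter_le_div_of_sum_le hg (by positivity)).trans
      (by rw [div_eq_mul_inv]; exact mul_le_of_le_one_left (by positivity) hsum)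
  have hinterval := card_filter_mem_Icc_le hK hf hbucket hv huv
  have hunion := (card_le_card hcover).trans
    ((card_union_le _ _).trans (Nat.add_le_add_right (card_union_le _ _) _))
  have : (#D : ℝ) ≤ #{i | f i ∈ Set.Icc u v} + #{i | a i ≤ δ} + #{i | δ ^ 2 ≤ g i} := by
    exact_mod_cast hunion
  linarith

theorem card_defects_le {a f ytil ystar : ι → ℝ} {b : ℝ} {K : ℕ} {cap δ r : ℝ}
    (htil : IsKnapsackOpt InUnitCube a (fun i => f i * a i) b ytil)
    (hstar : IsKnapsackOpt IsBinary a (fun i => f i * a i) b ystar)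
    (hfrac : {i | ytil i ∈ Set.Ioo 0 1}.Subsingleton)
    (ha : ∀ i, a i ∈ Set.Ioc 0 1) (hf : ∀ i, f i ∈ Set.Ioo 0 1) (hK : 0 < K)
    (hbucket : ∀ k < K, (#{i | f i ∈ bucket K k} : ℝ) ≤ cap) (hδ : 0 < δ)
    (hr : (δ * K + 2) * cap + #{i | a i ≤ δ} + (δ ^ 2)⁻¹ ≤ r) :
    (#{i | ytil i = 1 ∧ ystar i = 0} : ℝ) ≤ r ∧ (#{i | ytil i = 0 ∧ ystar i = 1} : ℝ) ≤ r := by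
  obtain ⟨t, ht, hthr, hsum⟩ := exists_threshold_sum_mul_abs_le_one htil hstar ha
    (fun i => Set.Ioo_subset_Ioc_self (hf i)) hfrac
  have hg : ∀ i, 0 ≤ a i * |f i - t| * |ytil i - ystar i| := fun i => by
    have := (ha i).1
    positivity
  have hf' : ∀ i, f i ∈ Set.Ico 0 1 := fun i => Set.Ioo_subset_Ico_self (hf i)
  constructor
  · refine (card_le_of_cover hK hf' hbucket (u := t) (by positivity)
      (le_add_of_nonneg_right hδ.le) hδ hg hsum fun i hi => ?_).trans
      (by rwa [add_sub_cancel_left])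
    obtain ⟨h1, h0⟩ := (mem_filter.1 hi).2
    have hti : t ≤ f i := not_lt.1 fun h => by simp [hthr.1 i h] at h1
    by_cases hnear : f i ≤ t + δ
    · exact Or.inl ⟨hti, hnear⟩
    by_cases hsmall : a i ≤ δ
    · exact Or.inr (Or.inl hsmall)
    refine Or.inr (Or.inr ?_)
    rw [h1, h0, abs_of_nonneg (sub_nonneg.2 hti)]
    norm_num
    nlinarith
  · refine (card_le_of_cover hK hf' hbucket ht (sub_le_self t hδ.le) hδ
      hg hsum fun i hi => ?_).trans (by rwa [sub_sub_cancel])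
    obtain ⟨h0, h1⟩ := (mem_filter.1 hi).2
    have hti : f i ≤ t := not_lt.1 fun h => by simp [hthr.2 i h] at h0
    by_cases hnear : t - δ ≤ f i
    · exact Or.inl ⟨hnear, hti⟩
    by_cases hsmall : a i ≤ δ
    · exact Or.inr (Or.inl hsmall)
    refine Or.inr (Or.inr ?_)
    rw [h1, h0, abs_of_nonpos (sub_nonpos.2 hti)]
    norm_num
    nlinarith

lemma IsBinary.hyperplane_bounds {y : ι → ℝ} (hy : IsBinary y) (p q : ι → Prop)
    [DecidablePred p] [DecidablePred q] {r : ℝ} (hp : (#{i | p i ∧ y i = 0} : ℝ) ≤ r)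
    (hq : (#{i | q i ∧ y i = 1} : ℝ) ≤ r) :
    (#{i | p i} : ℝ) - r ≤ ∑ i ∈ {i | p i}, y i ∧ ∑ i ∈ {i | q i}, y i ≤ r := by
  rw [hy.sum_eq_card, hy.sum_eq_card, filter_filter, filter_filter]
  refine ⟨?_, hq⟩
  have hsplit := card_filter_add_card_filter_not (s := ({i | p i} : Finset ι)) (fun i => y i = 1)
  rw [filter_filter, filter_filter] at hsplit
  have hzero : #{i | p i ∧ ¬y i = 1} = #{i | p i ∧ y i = 0} := by
    congr 1
    exact filter_congr fun i _ => by rcases hy i with h | h <;> simp [h]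
  rw [hzero] at hsplit
  have : (#{i | p i ∧ y i = 1} : ℝ) + #{i | p i ∧ y i = 0} = #{i | p i} := by exact_mod_cast hsplit
  linarith

lemma branchingHyperplanesValid_of_card_le (a f : ι → ℝ) (b : ℝ) {r : ℝ}
    (hr : (Fintype.card ι : ℝ) ≤ r) : BranchingHyperplanesValid a f b r := by
  intro ystar hstar _ _ ytil _ _ _ _
  have hcard : ∀ s : Finset ι, (#s : ℝ) ≤ r := fun s =>
    le_trans (by exact_mod_cast card_le_univ s) hr
  exact IsBinary.hyperplane_bounds hstar _ _ (hcard _) (hcard _)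

lemma thirty_two_le_sq {x : ℝ} (hx : 4 * √2 ≤ x) : 32 ≤ x ^ 2 := by
  have h : (4 * √2) ^ 2 = 32 := by rw [mul_pow, sq_sqrt (by norm_num)]; norm_num
  exact h ▸ pow_le_pow_left₀ (by positivity) hx 2

lemma pow_four_div_le {x K : ℝ} (hx : 32 ≤ x ^ 2) (hK : 2 * x ^ 2 - 1 ≤ K) :
    x ^ 4 / K ≤ 32 / 63 * x ^ 2 := by
  rw [div_le_iff₀ (by linarith)]
  nlinarith

lemma bucket_exponent_le {x K : ℝ} (hx : 32 ≤ x ^ 2) (hK : 2 * x ^ 2 - 1 ≤ K) :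
    x ^ 4 / K - log 2 * (x ^ 4 / K + x ^ 2 / 2) ≤ -x ^ 2 / 8 := by
  have := pow_four_div_le hx hK
  nlinarith [log_two_gt_d9, log_two_lt_d9]

lemma small_cost_exponent_le {x : ℝ} (hx : 1 ≤ x) :
    x ^ 4 * x⁻¹ - log 2 * (2 * x ^ 3) ≤ -x ^ 2 / 8 := by
  have : x ^ 4 * x⁻¹ = x ^ 3 := by field_simp
  rw [this]
  nlinarith [log_two_gt_d9, pow_le_pow_left₀ zero_le_one hx 2,
    mul_le_mul_of_nonneg_left hx (sq_nonneg x)]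

lemma defect_budget_le {x K : ℝ} (hx : 4 * √2 ≤ x) (hK1 : 2 * x ^ 2 - 1 ≤ K)
    (hK2 : K ≤ 2 * x ^ 2) :
    (x⁻¹ * K + 2) * (x ^ 4 / K + x ^ 2 / 2) + 2 * x ^ 3 + (x⁻¹ ^ 2)⁻¹ ≤ 4 * √2 * x ^ 3 := by
  have hx32 := thirty_two_le_sq hx
  have hsqrt : (5.65 : ℝ) ≤ 4 * √2 := by
    nlinarith [sq_sqrt (show (0 : ℝ) ≤ 2 by norm_num), sqrt_nonneg 2]
  have hx0 : 0 < x := by linarith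
  have hcount : x⁻¹ * K ≤ 2 * x := by
    rw [inv_mul_le_iff₀ hx0]
    nlinarith
  have hcap := pow_four_div_le hx32 hK1
  have hK0 : 0 < K := by linarith
  have hprod : (x⁻¹ * K + 2) * (x ^ 4 / K + x ^ 2 / 2) ≤
      (2 * x + 2) * (32 / 63 * x ^ 2 + x ^ 2 / 2) := by
    gcongr
  rw [inv_pow, inv_inv]
  nlinarith [mul_le_mul_of_nonneg_right hsqrt (pow_nonneg hx0.le 3)]

lemma rpow_quarter_pow {y : ℝ} (hy : 0 ≤ y) (k : ℕ) :
    (y ^ (1 / 4 : ℝ)) ^ k = y ^ ((k : ℝ) / 4) := by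
  rw [← rpow_natCast, ← rpow_mul hy]
  ring_nf

theorem branchingHyperplanesValid_of_counts {a f : ι → ℝ} (b : ℝ) {x : ℝ} {K : ℕ}
    (ha : ∀ i, a i ∈ Set.Ioc 0 1) (hf : ∀ i, f i ∈ Set.Ioo 0 1) (hx : 4 * √2 ≤ x)
    (hK1 : 2 * x ^ 2 - 1 ≤ K) (hK2 : K ≤ 2 * x ^ 2)
    (hbucket : ∀ k < K, (#{i | f i ∈ bucket K k} : ℝ) ≤ x ^ 4 / K + x ^ 2 / 2)
    (hsmall : (#{i | a i ≤ x⁻¹} : ℝ) ≤ 2 * x ^ 3) :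
    BranchingHyperplanesValid a f b (4 * √2 * x ^ 3) := by
  intro ystar h1 h2 h3 ytil h4 h5 h6 hfrac
  have hx0 : 0 < x := lt_of_lt_of_le (by positivity) hx
  have hK : 0 < K := by exact_mod_cast (show (0 : ℝ) < K by nlinarith [thirty_two_le_sq hx])
  obtain ⟨hU, hL⟩ := card_defects_le (r := 4 * √2 * x ^ 3) ⟨h4, h5, h6⟩ ⟨h1, h2, h3⟩ hfrac ha hf
    hK hbucket (inv_pos.2 hx0) (by linarith [defect_budget_le hx hK1 hK2])
  exact IsBinary.hyperplane_bounds h1 _ _ hU hL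

lemma exp_mul_indicator_one {Ω : Type*} (S : Set Ω) (t : ℝ) :
    (fun ω => exp (t * S.indicator 1 ω)) = fun ω => 1 + (exp t - 1) * S.indicator 1 ω := by
  ext ω
  by_cases h : ω ∈ S <;> simp [h]

section Probability

variable {Ω : Type*} [MeasurableSpace Ω] {μ : Measure Ω}

lemma integrable_exp_mul_indicator_one [IsFiniteMeasure μ] {S : Set Ω} (hS : MeasurableSet S)
    (t : ℝ) : Integrable (fun ω => exp (t * S.indicator 1 ω)) μ := by
  rw [exp_mul_indicator_one]
  exact (integrable_const 1).add (((integrable_const 1).indicator hS).const_mul _)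

lemma mgf_indicator_le_exp {S : Set Ω} (hS : MeasurableSet S) [IsProbabilityMeasure μ]
    {p t : ℝ} (ht : 0 ≤ t) (hp : μ.real S ≤ p) :
    mgf (S.indicator 1) μ t ≤ exp (p * (exp t - 1)) := by
  have hint : Integrable (S.indicator (1 : Ω → ℝ)) μ := (integrable_const 1).indicator hS
  rw [mgf, exp_mul_indicator_one, integral_add (integrable_const 1) (hint.const_mul _),
    integral_const_mul, integral_indicator_one hS]
  simp only [integral_const, probReal_univ, smul_eq_mul, one_mul]
  have : 0 ≤ exp t - 1 := by linarith [one_le_exp ht]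
  calc 1 + (exp t - 1) * μ.real S ≤ 1 + p * (exp t - 1) := by nlinarith
    _ ≤ exp (p * (exp t - 1)) := by linarith [add_one_le_exp (p * (exp t - 1))]

/-- Chernoff's bound for the number of independent variables that hit `T`. -/
theorem measure_card_filter_mem_ge_le_exp {β : Type*} [MeasurableSpace β] {X : ι → Ω → β}
    (hX : ∀ i, Measurable (X i)) (hind : iIndepFun X μ) {T : Set β} [DecidablePred (· ∈ T)]
    (hT : MeasurableSet T) {p t : ℝ} (ht : 0 ≤ t) (hp : ∀ i, μ.real (X i ⁻¹' T) ≤ p) (c : ℝ) :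
    μ {ω | c ≤ #{i | X i ω ∈ T}} ≤
      ENNReal.ofReal (exp (Fintype.card ι * p * (exp t - 1) - t * c)) := by
  have := hind.isProbabilityMeasure
  set Z : ι → Ω → ℝ := fun i => (X i ⁻¹' T).indicator 1
  have hZ : ∀ i, Measurable (Z i) := fun i => measurable_one.indicator (hX i hT)
  have hZind : iIndepFun Z μ :=
    hind.comp (fun _ => T.indicator 1) fun _ => measurable_one.indicator hT
  have hcount : ∀ ω, (#{i | X i ω ∈ T} : ℝ) = (∑ i, Z i) ω := fun ω => by
    rw [natCast_card_filter, Finset.sum_apply]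
    exact sum_congr rfl fun i _ => by by_cases h : X i ω ∈ T <;> simp [Z, h]
  have hint : Integrable (fun ω => exp (t * (∑ i, Z i) ω)) μ :=
    hZind.integrable_exp_mul_sum hZ fun i _ =>
      integrable_exp_mul_indicator_one (hX i hT) t
  have hmgf : mgf (∑ i, Z i) μ t ≤ exp (Fintype.card ι * p * (exp t - 1)) := by
    rw [hZind.mgf_sum hZ]
    calc ∏ i, mgf (Z i) μ t ≤ ∏ _i : ι, exp (p * (exp t - 1)) :=
          prod_le_prod (fun i _ => mgf_nonneg) fun i _ => mgf_indicator_le_exp (hX i hT) ht (hp i)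
      _ = _ := by rw [prod_const, card_univ, ← exp_nat_mul, mul_assoc]
  have hreal : μ.real {ω | c ≤ (∑ i, Z i) ω} ≤
      exp (Fintype.card ι * p * (exp t - 1) - t * c) := by
    calc _ ≤ exp (-t * c) * mgf (∑ i, Z i) μ t := measure_ge_le_exp_mul_mgf c ht hint
      _ ≤ exp (-t * c) * exp (Fintype.card ι * p * (exp t - 1)) := by gcongr
      _ = _ := by rw [← exp_add]; ring_nf
  simp_rw [hcount]
  rw [← ofReal_measureReal]
  exact ENNReal.ofReal_le_ofReal hreal

lemma ae_mem_Ioo_of_map_eq {X : Ω → ℝ} (hX : Measurable X)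
    (hunif : μ.map X = volume.restrict (Set.Icc 0 1)) : ∀ᵐ ω ∂μ, X ω ∈ Set.Ioo 0 1 := by
  refine ae_of_ae_map hX.aemeasurable ?_
  rw [hunif, ae_restrict_iff' measurableSet_Icc]
  exact Ioo_ae_eq_Icc.symm.le

lemma measureReal_preimage_of_map_eq {X : Ω → ℝ} (hX : Measurable X)
    (hunif : μ.map X = volume.restrict (Set.Icc 0 1)) {T : Set ℝ} (hT : MeasurableSet T) :
    μ.real (X ⁻¹' T) = volume.real (T ∩ Set.Icc 0 1) := by
  rw [← map_measureReal_apply hX hT, hunif, measureReal_restrict_apply hT]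

theorem measure_count_ge_le_of_uniform {X : ι → Ω → ℝ} (hX : ∀ i, Measurable (X i))
    (hind : iIndepFun X μ) (hunif : ∀ i, μ.map (X i) = volume.restrict (Set.Icc 0 1))
    {T : Set ℝ} [DecidablePred (· ∈ T)] (hT : MeasurableSet T) {p : ℝ}
    (hp : volume.real (T ∩ Set.Icc 0 1) ≤ p) (c : ℝ) :
    μ {ω | c ≤ #{i | X i ω ∈ T}} ≤ ENNReal.ofReal (exp (Fintype.card ι * p - log 2 * c)) := by
  have := measure_card_filter_mem_ge_le_exp hX hind hT (log_nonneg one_le_two)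
    (fun i => (measureReal_preimage_of_map_eq (hX i) (hunif i) hT).trans_le hp) c
  rwa [exp_log two_pos, show (2 : ℝ) - 1 = 1 by norm_num, mul_one] at this

lemma measure_bucket_count_ge_le {f : ι → Ω → ℝ} (hf : ∀ i, Measurable (f i))
    (hind : iIndepFun f μ) (hunif : ∀ i, μ.map (f i) = volume.restrict (Set.Icc 0 1))
    {x : ℝ} (hcard : (Fintype.card ι : ℝ) = x ^ 4) (hx : 32 ≤ x ^ 2) {K : ℕ}
    (hK : 2 * x ^ 2 - 1 ≤ K) (k : ℕ) :
    μ {ω | x ^ 4 / K + x ^ 2 / 2 ≤ #{i | f i ω ∈ bucket K k}} ≤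
      ENNReal.ofReal (exp (-x ^ 2 / 8)) := by
  have hvol : volume.real (bucket K k ∩ Set.Icc 0 1) ≤ 1 / K := by
    refine (measureReal_mono Set.inter_subset_left measure_Ico_lt_top.ne).trans ?_
    rw [volume_real_Ico, ← sub_div, add_sub_cancel_left]
    exact max_le le_rfl (by positivity)
  refine (measure_count_ge_le_of_uniform hf hind hunif measurableSet_Ico hvol _).trans ?_
  gcongr
  rw [hcard, mul_one_div]
  exact bucket_exponent_le hx hK

lemma measure_small_cost_count_ge_le {a : ι → Ω → ℝ} (ha : ∀ i, Measurable (a i))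
    (hind : iIndepFun a μ) (hunif : ∀ i, μ.map (a i) = volume.restrict (Set.Icc 0 1))
    {x : ℝ} (hcard : (Fintype.card ι : ℝ) = x ^ 4) (hx : 1 ≤ x) :
    μ {ω | 2 * x ^ 3 ≤ #{i | a i ω ∈ Set.Iic x⁻¹}} ≤ ENNReal.ofReal (exp (-x ^ 2 / 8)) := by
  have hvol : volume.real (Set.Iic x⁻¹ ∩ Set.Icc 0 1) ≤ x⁻¹ := by
    refine (measureReal_mono (s₂ := Set.Icc 0 x⁻¹) (fun y hy => ⟨hy.2.1, hy.1⟩)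
      measure_Icc_lt_top.ne).trans ?_
    rw [volume_real_Icc, sub_zero]
    exact max_le le_rfl (by positivity)
  refine (measure_count_ge_le_of_uniform ha hind hunif measurableSet_Iic hvol _).trans ?_
  gcongr
  rw [hcard]
  exact small_cost_exponent_le hx

lemma measure_biUnion_range_union_le {s : ℕ → Set Ω} {t : Set Ω} {K : ℕ} {ε : ℝ≥0∞}
    (hs : ∀ k < K, μ (s k) ≤ ε) (ht : μ t ≤ ε) :
    μ ((⋃ k ∈ range K, s k) ∪ t) ≤ (K + 1) * ε :=
  calc _ ≤ ∑ k ∈ range K, μ (s k) + μ t :=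
        (measure_union_le _ _).trans (add_le_add_left (measure_biUnion_finset_le _ _) _)
    _ ≤ ∑ _k ∈ range K, ε + ε := add_le_add (sum_le_sum fun k hk => hs k (mem_range.1 hk)) ht
    _ = (K + 1) * ε := by rw [sum_const, card_range, nsmul_eq_mul, add_mul, one_mul]

theorem one_sub_le_measure_branchingHyperplanesValid {a f : ι → Ω → ℝ}
    (hameas : ∀ i, Measurable (a i)) (hfmeas : ∀ i, Measurable (f i))
    (hind : iIndepFun (Sum.elim a f) μ)
    (haunif : ∀ i, μ.map (a i) = volume.restrict (Set.Icc 0 1))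
    (hfunif : ∀ i, μ.map (f i) = volume.restrict (Set.Icc 0 1)) (b : ℝ) {x : ℝ}
    (hcard : (Fintype.card ι : ℝ) = x ^ 4) (hx : 4 * √2 ≤ x) :
    1 - (⌈2 * x ^ 2⌉₊ : ℝ≥0∞) * ENNReal.ofReal (exp (-x ^ 2 / 8)) ≤
      μ {ω | BranchingHyperplanesValid (fun i => a i ω) (fun i => f i ω) b (4 * √2 * x ^ 3)} := by
  have hx32 := thirty_two_le_sq hx
  have hx1 : 1 ≤ x := by nlinarith [lt_of_lt_of_le (by positivity : (0 : ℝ) < 4 * √2) hx]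
  have hceil : 1 ≤ ⌈2 * x ^ 2⌉₊ := Nat.one_le_iff_ne_zero.2 (Nat.ceil_pos.2 (by positivity)).ne'
  set K := ⌈2 * x ^ 2⌉₊ - 1
  have hKeq : (K : ℝ≥0∞) + 1 = ⌈2 * x ^ 2⌉₊ := by
    rw [← Nat.cast_add_one, Nat.sub_add_cancel hceil]
  have hKcast : (K : ℝ) = ⌈2 * x ^ 2⌉₊ - 1 := by rw [Nat.cast_sub hceil, Nat.cast_one]
  have hK1 : 2 * x ^ 2 - 1 ≤ K := by linarith [Nat.le_ceil (2 * x ^ 2)]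
  have hK2 : (K : ℝ) ≤ 2 * x ^ 2 := by
    linarith [Nat.ceil_lt_add_one (by positivity : 0 ≤ 2 * x ^ 2)]
  set bad := (⋃ k ∈ range K, {ω | x ^ 4 / K + x ^ 2 / 2 ≤ #{i | f i ω ∈ bucket K k}}) ∪
    {ω | 2 * x ^ 3 ≤ #{i | a i ω ∈ Set.Iic x⁻¹}}
  have hindf : iIndepFun f μ := hind.precomp (g := Sum.inr) Sum.inr_injective
  have hinda : iIndepFun a μ := hind.precomp (g := Sum.inl) Sum.inl_injective
  have hbad : μ bad ≤ (⌈2 * x ^ 2⌉₊ : ℝ≥0∞) * ENNReal.ofReal (exp (-x ^ 2 / 8)) :=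
    hKeq ▸ measure_biUnion_range_union_le
      (fun k _ => measure_bucket_count_ge_le hfmeas hindf hfunif hcard hx32 hK1 k)
      (measure_small_cost_count_ge_le hameas hinda haunif hcard hx1)
  have hgood : ∀ᵐ ω ∂μ, ω ∈ badᶜ →
      BranchingHyperplanesValid (fun i => a i ω) (fun i => f i ω) b (4 * √2 * x ^ 3) := by
    filter_upwards [ae_all_iff.2 fun i => ae_mem_Ioo_of_map_eq (hameas i) (haunif i),
      ae_all_iff.2 fun i => ae_mem_Ioo_of_map_eq (hfmeas i) (hfunif i)] with ω ha hf hω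
    simp only [bad, Set.mem_compl_iff, Set.mem_union, Set.mem_iUnion, Set.mem_ofPred_eq, not_or,
      not_exists, not_le, mem_range, Set.mem_Iic] at hω
    exact branchingHyperplanesValid_of_counts b (fun i => Set.Ioo_subset_Ioc_self (ha i)) hf hx
      hK1 hK2 (fun k hk => (hω.1 k hk).le) hω.2.le
  have := hind.isProbabilityMeasure
  calc _ ≤ 1 - μ bad := tsub_le_tsub_left hbad 1
    _ ≤ μ badᶜ := tsub_le_iff_left.2 (by simpa using measure_univ_le_add_compl (μ := μ) bad)
    _ ≤ _ := measure_mono_ae hgood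

end Probability

end Knapsack

open Knapsack

theorem data_free_pmvb_knapsack_general
    {Ω : Type*} [MeasurableSpace Ω] (μ : Measure Ω)
    (n : ℕ)
    (b : ℝ)
    (a f : Fin n → Ω → ℝ)
    (hameas : ∀ i, Measurable (a i)) (hfmeas : ∀ i, Measurable (f i))
    (hind : iIndepFun (Sum.elim a f) μ)
    (haunif : ∀ i, μ.map (a i) = volume.restrict (Set.Icc (0 : ℝ) 1))
    (hfunif : ∀ i, μ.map (f i) = volume.restrict (Set.Icc (0 : ℝ) 1)) :
    1 - (⌈2 * Real.sqrt n⌉₊ : ℝ≥0∞) * ENNReal.ofReal (Real.exp (-Real.sqrt n / 8)) ≤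
      μ {ω | ∀ ystar : Fin n → ℝ,
        (∀ i, ystar i = 0 ∨ ystar i = 1) →
        (∑ i, a i ω * ystar i ≤ b) →
        (∀ y : Fin n → ℝ, (∀ i, y i = 0 ∨ y i = 1) → ∑ i, a i ω * y i ≤ b →
          ∑ i, (f i ω * a i ω) * y i ≤ ∑ i, (f i ω * a i ω) * ystar i) →
        ∀ ytil : Fin n → ℝ,
        (∀ i, ytil i ∈ Set.Icc (0 : ℝ) 1) →
        (∑ i, a i ω * ytil i ≤ b) →
        (∀ y : Fin n → ℝ, (∀ i, y i ∈ Set.Icc (0 : ℝ) 1) → ∑ i, a i ω * y i ≤ b →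
          ∑ i, (f i ω * a i ω) * y i ≤ ∑ i, (f i ω * a i ω) * ytil i) →
        {i | ytil i ∈ Set.Ioo (0 : ℝ) 1}.Subsingleton →
        ((((Finset.univ : Finset (Fin n)).filter (fun i => ytil i = 1)).card : ℝ)
            - 4 * Real.sqrt 2 * (n : ℝ) ^ ((3 : ℝ) / 4)
          ≤ ∑ i ∈ (Finset.univ : Finset (Fin n)).filter (fun i => ytil i = 1), ystar i) ∧
        (∑ i ∈ (Finset.univ : Finset (Fin n)).filter (fun i => ytil i = 0), ystar i
          ≤ 4 * Real.sqrt 2 * (n : ℝ) ^ ((3 : ℝ) / 4))} := by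
  set x := (n : ℝ) ^ (1 / 4 : ℝ)
  have hn0 : (0 : ℝ) ≤ n := n.cast_nonneg
  have hcard : (Fintype.card (Fin n) : ℝ) = x ^ 4 := by
    rw [Fintype.card_fin, rpow_quarter_pow hn0]; norm_num
  have hsqrt : √n = x ^ 2 := by rw [rpow_quarter_pow hn0, sqrt_eq_rpow]; norm_num
  have hcube : (n : ℝ) ^ ((3 : ℝ) / 4) = x ^ 3 := by rw [rpow_quarter_pow hn0]; norm_num
  rw [hsqrt, hcube]
  change _ ≤ μ {ω | BranchingHyperplanesValid (fun i => a i ω) (fun i => f i ω) b (4 * √2 * x ^ 3)}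
  rcases le_or_gt x (4 * √2) with hsmall | hlarge
  · have hvalid : ∀ ω, BranchingHyperplanesValid (fun i => a i ω) (fun i => f i ω) b
        (4 * √2 * x ^ 3) := fun ω => branchingHyperplanesValid_of_card_le _ _ b <| by
      rw [hcard, pow_succ']
      exact mul_le_mul_of_nonneg_right hsmall (by positivity)
    have := hind.isProbabilityMeasure
    simp only [hvalid, Set.ofPred_true, measure_univ]
    exact tsub_le_self
  · exact one_sub_le_measure_branchingHyperplanesValid hameas hfmeas hind haunif hfunif b hcard
      hlarge.le

/-- Theorem 4.1: data-free PMVB for the knapsack problem.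
With `b = γ n`, `γ ∈ (0, 1/2)`, and `2n` mutually independent random variables
`a 1, …, a n, f 1, …, f n` uniform on `[0,1]`, values `c i = f i * a i`, with
probability at least `1 - ⌈2√n⌉ exp (-√n/8)` the following holds: for every
optimal solution `ystar` of the `0/1`-knapsack problem and every optimal solution
`ytil` of its LP relaxation having at most one fractional coordinate, setting
`U = {i : ytil i = 1}` and `L = {i : ytil i = 0}`, one has
`∑_{i∈U} ystar i ≥ |U| - 4√2 n^{3/4}` and `∑_{i∈L} ystar i ≤ 4√2 n^{3/4}`. -/
theorem data_free_pmvb_knapsack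
    {Ω : Type*} [MeasurableSpace Ω] (μ : Measure Ω) [IsProbabilityMeasure μ]
    (n : ℕ) (hn : 1 ≤ n) (γ : ℝ) (hγ : γ ∈ Set.Ioo (0 : ℝ) (1 / 2))
    (b : ℝ) (hb : b = γ * n)
    (a f : Fin n → Ω → ℝ)
    (hameas : ∀ i, Measurable (a i)) (hfmeas : ∀ i, Measurable (f i))
    (hind : iIndepFun (Sum.elim a f) μ)
    (haunif : ∀ i, μ.map (a i) = volume.restrict (Set.Icc (0 : ℝ) 1))
    (hfunif : ∀ i, μ.map (f i) = volume.restrict (Set.Icc (0 : ℝ) 1)) :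
    1 - (⌈2 * Real.sqrt n⌉₊ : ℝ≥0∞) * ENNReal.ofReal (Real.exp (-Real.sqrt n / 8)) ≤
      μ {ω | ∀ ystar : Fin n → ℝ,
        (∀ i, ystar i = 0 ∨ ystar i = 1) →
        (∑ i, a i ω * ystar i ≤ b) →
        (∀ y : Fin n → ℝ, (∀ i, y i = 0 ∨ y i = 1) → ∑ i, a i ω * y i ≤ b →
          ∑ i, (f i ω * a i ω) * y i ≤ ∑ i, (f i ω * a i ω) * ystar i) →
        ∀ ytil : Fin n → ℝ,
        (∀ i, ytil i ∈ Set.Icc (0 : ℝ) 1) →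
        (∑ i, a i ω * ytil i ≤ b) →
        (∀ y : Fin n → ℝ, (∀ i, y i ∈ Set.Icc (0 : ℝ) 1) → ∑ i, a i ω * y i ≤ b →
          ∑ i, (f i ω * a i ω) * y i ≤ ∑ i, (f i ω * a i ω) * ytil i) →
        {i | ytil i ∈ Set.Ioo (0 : ℝ) 1}.Subsingleton →
        ((((Finset.univ : Finset (Fin n)).filter (fun i => ytil i = 1)).card : ℝ)
            - 4 * Real.sqrt 2 * (n : ℝ) ^ ((3 : ℝ) / 4)
          ≤ ∑ i ∈ (Finset.univ : Finset (Fin n)).filter (fun i => ytil i = 1), ystar i) ∧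
        (∑ i ∈ (Finset.univ : Finset (Fin n)).filter (fun i => ytil i = 0), ystar i
          ≤ 4 * Real.sqrt 2 * (n : ℝ) ^ ((3 : ℝ) / 4))} :=
  data_free_pmvb_knapsack_general μ n b a f hameas hfmeas hind haunif hfunif
end
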